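/- arXiv:0809.3546 — 3 statements merged into one kernel-verified Lean document; each statement's English description precedes it below -/
import Mathlib

section
/- Let q be a prime power, n, m positive integers, and ρ, t, ρ', t' nonnegative integers with 2t' + ρ' ≤ 2t + ρ. Let {X_s}_{s∈S} be a family of subsets of Fq^{n×m} indexed by a set S, and for nonnegative integers a, b define Y^{a,b}_{(s)} = ⋃_{x ∈ X_s} Y^{a,b}_x. If the sets Y^{ρ,t}_{(s)}, s ∈ S, are pairwise disjoint, then the sets Y^{ρ',t'}_{(s)}, s ∈ S, are also pairwise disjoint. -/
set_option autoImplicit false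

open Matrix

/-- The fan-out set `Y^{ρ,t}_x`. -/
def fanOut {F : Type*} [Field F] [Fintype F] {n m : ℕ} (ρ t : ℕ)
    (x : Matrix (Fin n) (Fin m) F) :
    Set (Matrix (Fin n) (Fin n) F × Matrix (Fin n) (Fin m) F) :=
  {p | n - ρ ≤ p.1.rank ∧ ∃ Z : Matrix (Fin n) (Fin m) F, Z.rank ≤ t ∧ p.2 = p.1 * x + Z}

/-!
Two channel inputs `x₁, x₂` are confusable, i.e. `Y^{ρ,t}_{x₁} ∩ Y^{ρ,t}_{x₂} ≠ ∅`, exactly when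
`rank (x₁ - x₂) ≤ 2t + ρ`. Indeed, from `A x₁ + Z₁ = A x₂ + Z₂` we get `rank (A (x₁ - x₂)) ≤ 2t`,
and a transfer matrix `A` of nullity at most `ρ` lowers the rank by at most `ρ`. Conversely, a
projection `A` killing `ρ` dimensions of the column space of `x₁ - x₂` leaves a matrix of rank
at most `2t`, which splits as `Z₁ + Z₂` with both ranks at most `t`. So confusability depends on
`(ρ, t)` only through `2t + ρ`.
-/

open Module

namespace Submodule

variable {K V V' : Type*} [DivisionRing K] [AddCommGroup V] [Module K V]
  [AddCommGroup V'] [Module K V']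

theorem exists_le_finrank_eq (W : Submodule K V) {k : ℕ} (hk : k ≤ finrank K W) :
    ∃ U ≤ W, finrank K U = k := by
  obtain ⟨v, hv⟩ := exists_linearIndependent_of_le_finrank hk
  refine ⟨(span K (Set.range v)).map W.subtype, map_subtype_le W _, ?_⟩
  rw [finrank_map_subtype_eq, finrank_span_eq_card hv, Fintype.card_fin]

theorem finrank_map_add_finrank_inf_ker (f : V →ₗ[K] V') (W : Submodule K V)
    [FiniteDimensional K W] :
    finrank K (W.map f) + finrank K ↥(W ⊓ LinearMap.ker f) = finrank K W := by
  rw [← LinearMap.range_domRestrict, ← (f.domRestrict W).finrank_range_add_finrank_ker,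
    LinearMap.ker_domRestrict, ← finrank_map_subtype_eq, map_comap_subtype]

theorem finrank_le_finrank_map_add_finrank_ker [FiniteDimensional K V] (f : V →ₗ[K] V')
    (W : Submodule K V) : finrank K W ≤ finrank K (W.map f) + finrank K (LinearMap.ker f) := by
  rw [← finrank_map_add_finrank_inf_ker f W]
  exact Nat.add_le_add_left (finrank_mono inf_le_right) _

theorem finrank_map_le_finrank_sub_of_le_ker [FiniteDimensional K V] (f : V →ₗ[K] V')
    {W U : Submodule K V} (hUW : U ≤ W) (hUf : U ≤ LinearMap.ker f) :
    finrank K (W.map f) ≤ finrank K W - finrank K U := by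
  have := finrank_map_add_finrank_inf_ker f W
  have : finrank K U ≤ finrank K ↥(W ⊓ LinearMap.ker f) := finrank_mono (le_inf hUW hUf)
  omega

end Submodule

namespace Matrix

variable {K : Type*} [Field K] {l m n : Type*} [Fintype n]

theorem rank_add_le (A B : Matrix m n K) : (A + B).rank ≤ A.rank + B.rank := by
  refine (Submodule.finrank_mono ?_).trans (Submodule.finrank_add_le_finrank_add_finrank _ _)
  rintro _ ⟨v, rfl⟩
  rw [mulVecLin_add]
  exact Submodule.add_mem_sup ⟨v, rfl⟩ ⟨v, rfl⟩

theorem rank_neg (A : Matrix m n K) : (-A).rank = A.rank := by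
  rw [← neg_one_smul K A]
  exact rank_smul_of_mem_nonZeroDivisors A (isUnit_one.neg.mem_nonZeroDivisors)

theorem rank_sub_le (A B : Matrix m n K) : (A - B).rank ≤ A.rank + B.rank := by
  simpa only [sub_eq_add_neg, rank_neg] using rank_add_le A (-B)

theorem rank_le_rank_mul_add [Fintype m] (A : Matrix l m K) (B : Matrix m n K) :
    B.rank ≤ (A * B).rank + (Fintype.card m - A.rank) := by
  have hker := A.mulVecLin.finrank_range_add_finrank_ker
  rw [finrank_pi] at hker
  have :=
    Submodule.finrank_le_finrank_map_add_finrank_ker A.mulVecLin (LinearMap.range B.mulVecLin)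
  rw [← LinearMap.range_comp, ← mulVecLin_mul] at this
  unfold rank
  omega

theorem exists_rank_le_and_rank_one_sub_mul_le [Fintype m] [DecidableEq m] (M : Matrix m n K)
    (k : ℕ) :
    ∃ P : Matrix m m K, P.rank ≤ k ∧ ((1 - P) * M).rank ≤ M.rank - k := by
  -- `P` projects onto a `min k M.rank`-dimensional subspace `U` of the column space of `M`,
  -- so `1 - P` kills `U`.
  obtain ⟨U, hUM, hU⟩ :=
    (LinearMap.range M.mulVecLin).exists_le_finrank_eq (min_le_right k M.rank)
  obtain ⟨U₀, hUU₀⟩ := Submodule.exists_isCompl U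
  have hQ : 1 - LinearMap.toMatrix' (U.projection U₀ hUU₀) =
      LinearMap.toMatrix' (U₀.projection U hUU₀.symm) := by
    rw [Submodule.projection_eq_id_sub_projection hUU₀, map_sub, LinearMap.toMatrix'_id]
  refine ⟨LinearMap.toMatrix' (U.projection U₀ hUU₀), ?_, ?_⟩
  · rw [rank, ← toLin'_apply', toLin'_toMatrix', Submodule.range_projection, hU]
    exact min_le_left _ _
  · rw [hQ, rank, mulVecLin_mul, ← toLin'_apply', toLin'_toMatrix', LinearMap.range_comp]
    refine (Submodule.finrank_map_le_finrank_sub_of_le_ker _ hUM ?_).trans ?_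
    · rw [Submodule.ker_projection]
    · rw [hU, rank]
      omega

theorem exists_add_eq_of_rank_le_add [Fintype m] (M : Matrix m n K) {a b : ℕ}
    (h : M.rank ≤ a + b) :
    ∃ M₁ M₂ : Matrix m n K, M₁.rank ≤ a ∧ M₂.rank ≤ b ∧ M₁ + M₂ = M := by
  classical
  obtain ⟨P, hP, hPM⟩ := M.exists_rank_le_and_rank_one_sub_mul_le a
  refine ⟨P * M, (1 - P) * M, (rank_mul_le_left P M).trans hP, by omega, ?_⟩
  rw [← Matrix.add_mul, add_sub_cancel, Matrix.one_mul]

theorem exists_card_sub_le_rank_and_rank_mul_le [Fintype m] (D : Matrix m n K) (k : ℕ) :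
    ∃ A : Matrix m m K, Fintype.card m - k ≤ A.rank ∧ (A * D).rank ≤ D.rank - k := by
  classical
  obtain ⟨P, hP, hPD⟩ := D.exists_rank_le_and_rank_one_sub_mul_le k
  refine ⟨1 - P, ?_, hPD⟩
  have := rank_add_le P (1 - P)
  rw [add_sub_cancel, rank_one] at this
  omega

end Matrix

section fanOut

variable {F : Type*} [Field F] [Fintype F] {n m ρ t : ℕ} {x₁ x₂ : Matrix (Fin n) (Fin m) F}

theorem rank_sub_le_of_mem_fanOut {p : Matrix (Fin n) (Fin n) F × Matrix (Fin n) (Fin m) F}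
    (h₁ : p ∈ fanOut ρ t x₁) (h₂ : p ∈ fanOut ρ t x₂) : (x₁ - x₂).rank ≤ 2 * t + ρ := by
  obtain ⟨A, y⟩ := p
  obtain ⟨hA : n - ρ ≤ A.rank, Z₁, hZ₁, hy₁⟩ := h₁
  obtain ⟨-, Z₂, hZ₂, hy₂⟩ := h₂
  have hAx : A * (x₁ - x₂) = Z₂ - Z₁ := by
    rw [Matrix.mul_sub, sub_eq_sub_iff_add_eq_add, add_comm Z₂]
    exact hy₁.symm.trans hy₂
  have hZ := rank_sub_le Z₂ Z₁
  have := rank_le_rank_mul_add A (x₁ - x₂)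
  rw [hAx, Fintype.card_fin] at this
  omega

theorem fanOut_inter_nonempty_of_rank_sub_le (h : (x₁ - x₂).rank ≤ 2 * t + ρ) :
    (fanOut ρ t x₁ ∩ fanOut ρ t x₂).Nonempty := by
  obtain ⟨A, hA, hAx⟩ := (x₁ - x₂).exists_card_sub_le_rank_and_rank_mul_le ρ
  rw [Fintype.card_fin] at hA
  obtain ⟨Z₁, Z₂, hZ₁, hZ₂, hZ⟩ := (A * (x₁ - x₂)).exists_add_eq_of_rank_le_add (a := t) (b := t)
    (by omega)
  have hAx₁ : A * x₁ = A * x₂ + (Z₁ + Z₂) := by rw [hZ, Matrix.mul_sub, add_sub_cancel]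
  refine ⟨(A, A * x₁ - Z₁), ⟨hA, -Z₁, by rwa [rank_neg], sub_eq_add_neg _ _⟩, hA, Z₂, hZ₂, ?_⟩
  change A * x₁ - Z₁ = A * x₂ + Z₂
  rw [hAx₁, add_sub_assoc, add_sub_cancel_left]

end fanOut

theorem fanOut_union_pairwise_disjoint_mono_general
    (n m : ℕ)
    (ρ t ρ' t' : ℕ) (hle : 2 * t' + ρ' ≤ 2 * t + ρ)
    (F : Type) [Field F] [Fintype F]
    (S : Type) (Xs : S → Set (Matrix (Fin n) (Fin m) F))
    (hdisj : ∀ s₁ s₂ : S, s₁ ≠ s₂ →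
      (⋃ x ∈ Xs s₁, fanOut ρ t x) ∩ (⋃ x ∈ Xs s₂, fanOut ρ t x) = ∅) :
    ∀ s₁ s₂ : S, s₁ ≠ s₂ →
      (⋃ x ∈ Xs s₁, fanOut ρ' t' x) ∩ (⋃ x ∈ Xs s₂, fanOut ρ' t' x) = ∅ := by
  intro s₁ s₂ hne
  refine Set.not_nonempty_iff_eq_empty.1 fun ⟨p, hp₁, hp₂⟩ => ?_
  obtain ⟨x₁, hx₁, hp₁⟩ := Set.mem_iUnion₂.1 hp₁
  obtain ⟨x₂, hx₂, hp₂⟩ := Set.mem_iUnion₂.1 hp₂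
  obtain ⟨p', hp'₁, hp'₂⟩ :=
    fanOut_inter_nonempty_of_rank_sub_le ((rank_sub_le_of_mem_fanOut hp₁ hp₂).trans hle)
  exact Set.eq_empty_iff_forall_notMem.1 (hdisj s₁ s₂ hne) p'
    ⟨Set.mem_iUnion₂.2 ⟨x₁, hx₁, hp'₁⟩, Set.mem_iUnion₂.2 ⟨x₂, hx₂, hp'₂⟩⟩

/-- If a (possibly stochastic) encoder with supports `Xs s`, `s ∈ S`, is universally
`t`-error-`ρ`-erasure-correcting and `2t' + ρ' ≤ 2t + ρ`, then it is also universally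
`t'`-error-`ρ'`-erasure-correcting. -/
theorem fanOut_union_pairwise_disjoint_mono
    (q : ℕ) (hq : IsPrimePow q) (n m : ℕ) (hn : 0 < n) (hm : 0 < m)
    (ρ t ρ' t' : ℕ) (hle : 2 * t' + ρ' ≤ 2 * t + ρ)
    (F : Type) [Field F] [Fintype F] (hF : Fintype.card F = q)
    (S : Type) (Xs : S → Set (Matrix (Fin n) (Fin m) F))
    (hdisj : ∀ s₁ s₂ : S, s₁ ≠ s₂ →
      (⋃ x ∈ Xs s₁, fanOut ρ t x) ∩ (⋃ x ∈ Xs s₂, fanOut ρ t x) = ∅) :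
    ∀ s₁ s₂ : S, s₁ ≠ s₂ →
      (⋃ x ∈ Xs s₁, fanOut ρ' t' x) ∩ (⋃ x ∈ Xs s₂, fanOut ρ' t' x) = ∅ :=
  fanOut_union_pairwise_disjoint_mono_general n m ρ t ρ' t' hle F S Xs hdisj
end

section
/- Let q be a prime power, L a field extension of Fq of degree m, and let H ∈ L^{k×n} and B ∈ L^{μ×n}. Let X be a random variable with values in L^n, and set S = HX and W = BX. If S is uniformly distributed on the image {Hx : x ∈ L^n}, then I(S;W) ≥ (rank H + rank B − rank [H; B]) · m · log q, where [H; B] is the stacked (k+μ)×n matrix and ranks are over L. -/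
set_option autoImplicit false

open Matrix MeasureTheory

/-- Shannon entropy (in nats) of a finitely-valued random variable. -/
noncomputable def entropy {Ω α : Type*} [Fintype α] [MeasurableSpace Ω]
    (P : Measure Ω) (X : Ω → α) : ℝ :=
  - ∑ a : α, (P {ω | X ω = a}).toReal * Real.log (P {ω | X ω = a}).toReal

/-- Mutual information (in nats) `I(X;Y) = H(X) + H(Y) - H(X,Y)`. -/
noncomputable def mutualInfo {Ω α β : Type*} [Fintype α] [Fintype β] [MeasurableSpace Ω]
    (P : Measure Ω) (X : Ω → α) (Y : Ω → β) : ℝ :=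
  entropy P X + entropy P Y - entropy P (fun ω => (X ω, Y ω))

/-!
The syndrome `S = H X` is uniform on the column space of `H`, so `H(S) = rank H · m log q`.
If `B x = B x'` then `H x - H x'` lies in `V = H (ker B)`, so conditioned on `W = B X` the
syndrome ranges over a single coset of `V`; the maximum-entropy bound on each fibre gives
`H(S | W) = H(S, W) - H(W) ≤ log |V| = dim V · m log q`. Rank–nullity for `H` restricted to
`ker B` gives `rank [H; B] = rank B + dim V`, and `I(S; W) = H(S) - H(S | W)`.
-/

open Real

namespace Real

theorem sum_negMulLog_le {ι : Type*} (t : Finset ι) (p : ι → ℝ) (hp : ∀ i ∈ t, 0 ≤ p i)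
    (N : ℕ) (hN : t.card ≤ N) :
    ∑ i ∈ t, negMulLog (p i) ≤ negMulLog (∑ i ∈ t, p i) + (∑ i ∈ t, p i) * log N := by
  rcases t.eq_empty_or_nonempty with rfl | ht
  · simp
  set S := ∑ i ∈ t, p i
  have hcard : (0 : ℝ) < t.card := by exact_mod_cast ht.card_pos
  have jensen := concaveOn_negMulLog.le_map_sum (t := t) (w := fun _ => (t.card : ℝ)⁻¹)
    (p := p) (fun _ _ => by positivity) (by simp [hcard.ne']) hp
  simp only [smul_eq_mul, ← Finset.mul_sum, negMulLog_mul] at jensen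
  calc ∑ i ∈ t, negMulLog (p i)
      = t.card * ((t.card : ℝ)⁻¹ * ∑ i ∈ t, negMulLog (p i)) := by field_simp
    _ ≤ t.card * (S * negMulLog (t.card : ℝ)⁻¹ + (t.card : ℝ)⁻¹ * negMulLog S) := by
        gcongr
    _ = negMulLog S + S * log t.card := by
        rw [negMulLog, log_inv]
        field_simp
        ring
    _ ≤ negMulLog S + S * log N := by
        gcongr
        exact Finset.sum_nonneg hp

end Real

section Entropy

variable {Ω α β : Type*} [MeasurableSpace Ω] [Fintype α] [Fintype β]

theorem entropy_eq_sum_negMulLog (P : Measure Ω) (Y : Ω → α) :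
    entropy P Y = ∑ a, negMulLog (P.real {ω | Y ω = a}) := by
  simp only [entropy, negMulLog, measureReal_def, neg_mul, Finset.sum_neg_distrib]

variable [DiscreteMeasurableSpace Ω] (P : Measure Ω)

theorem sum_measureReal_fiber_inter [IsFiniteMeasure P] (Y : Ω → α) (s : Set Ω) :
    ∑ a, P.real ({ω | Y ω = a} ∩ s) = P.real s := by
  have h := sum_measureReal_preimage_singleton (μ := P.restrict s) Finset.univ (f := Y)
    fun _ _ => .of_discrete
  simp only [measureReal_restrict_apply .of_discrete, Finset.coe_univ, Set.preimage_univ,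
    Set.univ_inter] at h
  exact h

variable [IsProbabilityMeasure P]

theorem sum_measureReal_fiber (Y : Ω → α) : ∑ a, P.real {ω | Y ω = a} = 1 := by
  simpa using sum_measureReal_fiber_inter P Y Set.univ

theorem entropy_eq_log_ncard_of_uniform (Y : Ω → α) {T : Set α} (hY : ∀ ω, Y ω ∈ T)
    (hunif : ∀ a ∈ T, ∀ a' ∈ T, P {ω | Y ω = a} = P {ω | Y ω = a'}) :
    entropy P Y = log T.ncard := by
  classical
  obtain ⟨ω₀⟩ := nonempty_of_isProbabilityMeasure P
  set c := P.real {ω | Y ω = Y ω₀}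
  have hfiber (a : α) : P.real {ω | Y ω = a} = if a ∈ T then c else 0 := by
    split_ifs with ha
    · rw [measureReal_def, hunif a ha _ (hY ω₀), ← measureReal_def]
    · rw [show {ω | Y ω = a} = ∅ from
        Set.eq_empty_of_forall_notMem fun ω h => ha (h ▸ hY ω), measureReal_empty]
  have hsum_ite (x : ℝ) : ∑ a, (if a ∈ T then x else 0) = T.ncard * x := by
    rw [← Finset.sum_filter, Finset.sum_const, nsmul_eq_mul, Set.ncard_eq_toFinset_card']
    simp
  have hsum : T.ncard * c = 1 := by
    rw [← hsum_ite, ← sum_measureReal_fiber P Y]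
    simp only [hfiber]
  have hN : (T.ncard : ℝ) ≠ 0 := left_ne_zero_of_mul_eq_one hsum
  rw [entropy_eq_sum_negMulLog]
  simp only [hfiber, apply_ite negMulLog, negMulLog_zero, hsum_ite]
  rw [eq_inv_of_mul_eq_one_right hsum, negMulLog, log_inv]
  field_simp

theorem entropy_pair_sub_entropy_le_log (Y : Ω → α) (Z : Ω → β) (M : ℕ)
    (hM : ∀ b, (Y '' (Z ⁻¹' {b})).ncard ≤ M) :
    entropy P (fun ω => (Y ω, Z ω)) - entropy P Z ≤ log M := by
  classical
  have hfiber (b : β) :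
      ∑ a, negMulLog (P.real {ω | (Y ω, Z ω) = (a, b)}) -
          negMulLog (P.real {ω | Z ω = b}) ≤ P.real {ω | Z ω = b} * log M := by
    set t := (Y '' (Z ⁻¹' {b})).toFinset
    have hzero (a : α) (ha : a ∉ t) : P.real {ω | (Y ω, Z ω) = (a, b)} = 0 := by
      convert measureReal_empty (μ := P)
      refine Set.eq_empty_of_forall_notMem fun ω hω => ha ?_
      obtain ⟨rfl, hZ⟩ := Prod.mk.inj hω
      exact Set.mem_toFinset.2 ⟨ω, hZ, rfl⟩
    have hmarg : ∑ a ∈ t, P.real {ω | (Y ω, Z ω) = (a, b)} = P.real {ω | Z ω = b} := by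
      rw [Finset.sum_subset t.subset_univ fun a _ ha => hzero a ha,
        ← sum_measureReal_fiber_inter P Y {ω | Z ω = b}]
      simp only [Prod.mk.injEq, Set.ofPred_and]
    rw [← Finset.sum_subset t.subset_univ fun a _ ha => by rw [hzero a ha, negMulLog_zero],
      ← hmarg, sub_le_iff_le_add']
    exact sum_negMulLog_le t _ (fun _ _ => measureReal_nonneg) M
      (by rw [← Set.ncard_eq_toFinset_card']; exact hM b)
  calc entropy P (fun ω => (Y ω, Z ω)) - entropy P Z
      = ∑ b, (∑ a, negMulLog (P.real {ω | (Y ω, Z ω) = (a, b)}) -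
          negMulLog (P.real {ω | Z ω = b})) := by
        rw [entropy_eq_sum_negMulLog, entropy_eq_sum_negMulLog, Fintype.sum_prod_type_right,
          Finset.sum_sub_distrib]
    _ ≤ ∑ b, P.real {ω | Z ω = b} * log M := Finset.sum_le_sum fun b _ => hfiber b
    _ = log M := by rw [← Finset.sum_mul, sum_measureReal_fiber P Z, one_mul]

theorem entropy_pair_sub_entropy_le_log_card_of_sub_mem [AddCommGroup α] (Y : Ω → α)
    (Z : Ω → β) (K : AddSubgroup α) (hK : ∀ ω ω', Z ω = Z ω' → Y ω - Y ω' ∈ K) :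
    entropy P (fun ω => (Y ω, Z ω)) - entropy P Z ≤ log (Nat.card K) := by
  refine entropy_pair_sub_entropy_le_log P Y Z _ fun b => ?_
  rcases (Z ⁻¹' {b}).eq_empty_or_nonempty with h | ⟨ω₀, hω₀⟩
  · simp [h]
  calc (Y '' (Z ⁻¹' {b})).ncard ≤ ((Y ω₀ + ·) '' (K : Set α)).ncard := by
        refine Set.ncard_le_ncard ?_ (Set.toFinite _)
        rintro _ ⟨ω, hω, rfl⟩
        exact ⟨Y ω - Y ω₀, hK ω ω₀ (hω.trans hω₀.symm), add_sub_cancel _ _⟩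
    _ ≤ (K : Set α).ncard := Set.ncard_image_le (Set.toFinite _)
    _ = Nat.card K := Nat.card_coe_set_eq _

end Entropy

theorem LinearMap.finrank_map_add_finrank_ker_inf {K V W : Type*} [DivisionRing K]
    [AddCommGroup V] [Module K V] [FiniteDimensional K V] [AddCommGroup W] [Module K W]
    (f : V →ₗ[K] W) (p : Submodule K V) :
    Module.finrank K (p.map f) + Module.finrank K (LinearMap.ker f ⊓ p : Submodule K V) =
      Module.finrank K p := by
  have h := (f.domRestrict p).finrank_range_add_finrank_ker
  rwa [LinearMap.range_domRestrict, LinearMap.ker_domRestrict,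
    ← Submodule.finrank_map_subtype_eq, Submodule.map_comap_subtype, inf_comm] at h

theorem Matrix.rank_fromRows {n k μ L : Type*} [Fintype n] [Fintype k] [Fintype μ] [Field L]
    (H : Matrix k n L) (B : Matrix μ n L) :
    (fromRows H B).rank = B.rank + Module.finrank L (B.mulVecLin.ker.map H.mulVecLin) := by
  have hker : (fromRows H B).mulVecLin.ker = H.mulVecLin.ker ⊓ B.mulVecLin.ker := by
    ext x
    simp [fromRows_mulVec, funext_iff]
  have h₁ := (fromRows H B).mulVecLin.finrank_range_add_finrank_ker
  have h₂ := B.mulVecLin.finrank_range_add_finrank_ker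
  have h₃ := H.mulVecLin.finrank_map_add_finrank_ker_inf B.mulVecLin.ker
  rw [hker] at h₁
  unfold Matrix.rank
  omega

theorem Module.log_natCard_eq_finrank_mul (K V : Type*) [DivisionRing K] [AddCommGroup V]
    [Module K V] [Module.Finite K V] :
    log (Nat.card V) = Module.finrank K V * log (Nat.card K) := by
  rw [Module.natCard_eq_pow_finrank (K := K), Nat.cast_pow, log_pow]

theorem mutualInfo_ge_of_uniform_syndrome_general
    (q m : ℕ)
    (F L : Type) [Field F] [Fintype F] (hF : Fintype.card F = q)
    [Field L] [Fintype L] [Algebra F L] (hm : Module.finrank F L = m)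
    (n k μ : ℕ)
    (H : Matrix (Fin k) (Fin n) L) (B : Matrix (Fin μ) (Fin n) L)
    (Ω : Type) [Fintype Ω] [MeasurableSpace Ω] [MeasurableSingletonClass Ω]
    (P : Measure Ω) [IsProbabilityMeasure P]
    (X : Ω → Fin n → L)
    (hSunif : ∀ x₁ x₂ : Fin n → L,
      P {ω | H *ᵥ X ω = H *ᵥ x₁} = P {ω | H *ᵥ X ω = H *ᵥ x₂}) :
    ((H.rank : ℝ) + (B.rank : ℝ) - ((Matrix.fromRows H B).rank : ℝ)) *
        (m * Real.log q) ≤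
      mutualInfo P (fun ω => H *ᵥ X ω) (fun ω => B *ᵥ X ω) := by
  set K := B.mulVecLin.ker.map H.mulVecLin
  have hlogL : log (Nat.card L) = m * log q := by
    rw [Module.log_natCard_eq_finrank_mul F L, hm, Nat.card_eq_fintype_card, hF]
  have hS : entropy P (fun ω => H *ᵥ X ω) = H.rank * log (Nat.card L) := by
    rw [entropy_eq_log_ncard_of_uniform P _ (T := Set.range (H *ᵥ ·)) (fun ω => ⟨X ω, rfl⟩)
      (by rintro _ ⟨x₁, rfl⟩ _ ⟨x₂, rfl⟩; exact hSunif x₁ x₂)]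
    change _ = (Module.finrank L (LinearMap.range H.mulVecLin) : ℝ) * _
    rw [← Module.log_natCard_eq_finrank_mul L, ← Nat.card_coe_set_eq]
    rfl
  have hSW :
      entropy P (fun ω => (H *ᵥ X ω, B *ᵥ X ω)) - entropy P (fun ω => B *ᵥ X ω) ≤
        Module.finrank L K * log (Nat.card L) := by
    rw [← Module.log_natCard_eq_finrank_mul L]
    refine entropy_pair_sub_entropy_le_log_card_of_sub_mem P _ _ K.toAddSubgroup
      fun ω ω' h => ⟨X ω - X ω', ?_, ?_⟩
    · simp [mulVec_sub, h]
    · simp [mulVec_sub]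
  rw [mutualInfo, Matrix.rank_fromRows, Nat.cast_add, ← hlogL]
  linarith

/-- If `S = HX` is uniformly distributed on the image `{Hx : x ∈ L^n}`, then with `W = BX`,
`I(S;W) ≥ (rank H + rank B - rank [H; B]) · m · log q`. -/
theorem mutualInfo_ge_of_uniform_syndrome
    (q m : ℕ) (hq : IsPrimePow q)
    (F L : Type) [Field F] [Fintype F] (hF : Fintype.card F = q)
    [Field L] [Fintype L] [Algebra F L] (hm : Module.finrank F L = m)
    (n k μ : ℕ)
    (H : Matrix (Fin k) (Fin n) L) (B : Matrix (Fin μ) (Fin n) L)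
    (Ω : Type) [Fintype Ω] [MeasurableSpace Ω] [MeasurableSingletonClass Ω]
    (P : Measure Ω) [IsProbabilityMeasure P]
    (X : Ω → Fin n → L)
    (hSunif : ∀ x₁ x₂ : Fin n → L,
      P {ω | H *ᵥ X ω = H *ᵥ x₁} = P {ω | H *ᵥ X ω = H *ᵥ x₂}) :
    ((H.rank : ℝ) + (B.rank : ℝ) - ((Matrix.fromRows H B).rank : ℝ)) *
        (m * Real.log q) ≤
      mutualInfo P (fun ω => H *ᵥ X ω) (fun ω => B *ᵥ X ω) :=
  mutualInfo_ge_of_uniform_syndrome_general q m F L hF hm n k μ H B Ω P X hSunif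
end

section
/- Let q be a prime power and L a field extension of Fq of degree m with m ≥ n. Let 1 ≤ k < n and let T ∈ L^{n×n} be invertible; write T^T = [G₁; G] where G₁ ∈ L^{k×n} consists of the first k rows of T^T and G ∈ L^{(n−k)×n} of the last n−k rows. Suppose the code {G^T u : u ∈ L^{n−k}} has minimum rank distance k + 1 (i.e., G generates an [n, n−k] linear MRD code over L). Let S be a random variable with values in L^k, let V be uniformly distributed on L^{n−k} and independent of S, and let X = T·(S; V) ∈ L^n, where (S; V) denotes the column vector obtained by stacking S on top of V. Then for every integer 0 ≤ μ ≤ n − k and every matrix B ∈ Fq^{μ×n} (acting on L^n via the embedding Fq ⊆ L), I(S; BX) = 0. -/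
set_option autoImplicit false

open Matrix MeasureTheory

/-- The rank weight of `x ∈ L^n`: the dimension over `F` of the `F`-span of its coordinates. -/
noncomputable def rankWeight (F : Type*) {L : Type*} [Field F] [Field L] [Algebra F L]
    {n : ℕ} (x : Fin n → L) : ℕ :=
  Module.finrank F (Submodule.span F (Set.range x))

/-- The minimum rank distance of a code `C ⊆ L^n` equals `d`. -/
def minRankDistEq (F : Type*) {L : Type*} [Field F] [Field L] [Algebra F L]
    {n : ℕ} (C : Set (Fin n → L)) (d : ℕ) : Prop :=
  IsLeast {e | ∃ x ∈ C, ∃ y ∈ C, x ≠ y ∧ rankWeight F (x - y) = e} d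

/-- The column vector `(s; v) ∈ L^n` obtained by stacking `s ∈ L^k` on top of
`v ∈ L^{n-k}`. -/
def stackVec {L : Type*} {k n : ℕ} (s : Fin k → L) (v : Fin (n - k) → L) : Fin n → L :=
  fun i => if h : (i : ℕ) < k then s ⟨i, h⟩
    else v ⟨(i : ℕ) - k, by have := i.isLt; omega⟩

/-- The last `n - k` rows of `Tᵀ`. -/
def lastRows {L : Type*} {k n : ℕ} (hkn : k < n) (M : Matrix (Fin n) (Fin n) L) :
    Matrix (Fin (n - k)) (Fin n) L :=
  M.submatrix (fun i : Fin (n - k) => (⟨k + (i : ℕ), by have := i.isLt; omega⟩ : Fin n)) id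

/-!
Write `Y = BX`. Since `X = T(S;0) + Gᵀ V`, we have `Y = a(S) + N(V)` with `a s = B T (s;0)` and
`N = B Gᵀ` linear. The point is that every `a s` lies in the range of `N`. Indeed the `F`-kernel
of `B` has dimension at least `n - μ ≥ k`, so it contains `k` independent vectors; over `L` they
span a `k`-dimensional `U ⊆ ker B` whose vectors have rank weight at most `k`. By the MRD property
`U` meets the `(n - k)`-dimensional code `C = Gᵀ L^{n-k}` trivially, so `C + U = L^n`, and hence
`B L^n = B C = range N`. Since `V` is uniform and independent of `S`, translating `N(V)` by
`a(s) ∈ range N` does not change its law: `Y` is a one-time pad of `a(S)`, independent of `S`.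
-/

section Probability

variable {Ω : Type*} [Fintype Ω] [MeasurableSpace Ω] [MeasurableSingletonClass Ω]
  {P : Measure Ω}

lemma measure_mem_inter_eq_sum {β : Type*} [Fintype β] (V : Ω → β) (A : Set β) (E : Set Ω) :
    P ({ω | V ω ∈ A} ∩ E) = ∑ v, A.indicator (fun v => P ({ω | V ω = v} ∩ E)) v := by
  classical
  have h := sum_measure_preimage_singleton (μ := P.restrict E) (Finset.univ.filter (· ∈ A))
    (f := V) fun _ _ => (Set.toFinite _).measurableSet
  simp only [Finset.coe_filter, Finset.mem_univ, true_and, Set.ofPred_mem_eq,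
    Measure.restrict_apply (Set.toFinite _).measurableSet] at h
  rw [Finset.sum_filter] at h
  exact h.symm

lemma sum_measure_fiber_eq_one [IsProbabilityMeasure P] {β : Type*} [Fintype β] (V : Ω → β) :
    ∑ v, P {ω | V ω = v} = 1 := by
  have h := measure_mem_inter_eq_sum (P := P) V Set.univ Set.univ
  simp only [Set.mem_univ, Set.ofPred_true, Set.inter_univ, measure_univ,
    Set.indicator_univ] at h
  exact h.symm

lemma measure_and_mem_eq_mul {α β : Type*} [Fintype β] {S : Ω → α} {V : Ω → β}
    (hindep : ∀ s v, P {ω | S ω = s ∧ V ω = v} = P {ω | S ω = s} * P {ω | V ω = v})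
    (s : α) (A : Set β) :
    P {ω | S ω = s ∧ V ω ∈ A} = P {ω | S ω = s} * P {ω | V ω ∈ A} := by
  have hE := measure_mem_inter_eq_sum (P := P) V A {ω | S ω = s}
  have hU := measure_mem_inter_eq_sum (P := P) V A Set.univ
  simp only [Set.inter_univ] at hU
  rw [Set.ofPred_and, Set.inter_comm, hE, hU, Finset.mul_sum]
  refine Finset.sum_congr rfl fun v _ => ?_
  by_cases hv : v ∈ A
  · simp only [Set.indicator_of_mem hv, Set.inter_comm, ← Set.ofPred_and, hindep]
  · simp [Set.indicator_of_notMem hv]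

lemma measure_mem_preimage_equiv_of_uniform {β : Type*} [Fintype β] {V : Ω → β}
    (hV : ∀ v₁ v₂, P {ω | V ω = v₁} = P {ω | V ω = v₂}) (e : β ≃ β) (A : Set β) :
    P {ω | V ω ∈ e ⁻¹' A} = P {ω | V ω ∈ A} := by
  have h := fun A => measure_mem_inter_eq_sum (P := P) V A Set.univ
  simp only [Set.inter_univ] at h
  rw [h, h, ← e.sum_comp (A.indicator _)]
  refine Finset.sum_congr rfl fun v _ => ?_
  by_cases hv : e v ∈ A
  · rw [Set.indicator_of_mem hv, Set.indicator_of_mem (show v ∈ e ⁻¹' A from hv), hV]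
  · rw [Set.indicator_of_notMem hv, Set.indicator_of_notMem (show v ∉ e ⁻¹' A from hv)]

lemma measure_and_eq_mul_measure_of_eq_mul [IsProbabilityMeasure P] {α β : Type*} [Fintype α]
    {S : Ω → α} {Y : Ω → β} {p : β → ENNReal}
    (h : ∀ s y, P {ω | S ω = s ∧ Y ω = y} = P {ω | S ω = s} * p y) (s : α) (y : β) :
    P {ω | S ω = s ∧ Y ω = y} = P {ω | S ω = s} * P {ω | Y ω = y} := by
  suffices hY : P {ω | Y ω = y} = p y by rw [hY, h]
  have hsum := measure_mem_inter_eq_sum (P := P) S Set.univ {ω | Y ω = y}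
  simp only [Set.mem_univ, Set.ofPred_true, Set.univ_inter, Set.indicator_univ,
    ← Set.ofPred_and, h] at hsum
  rw [hsum, ← Finset.sum_mul, sum_measure_fiber_eq_one, one_mul]

lemma sum_toReal_measure_fiber_eq_one [IsProbabilityMeasure P] {β : Type*} [Fintype β]
    (V : Ω → β) :
    ∑ v, (P {ω | V ω = v}).toReal = 1 := by
  rw [← ENNReal.toReal_sum fun _ _ => measure_ne_top _ _, sum_measure_fiber_eq_one,
    ENNReal.toReal_one]

lemma entropy_pair_eq_add_of_indep [IsProbabilityMeasure P] {α β : Type*} [Fintype α]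
    [Fintype β] {X : Ω → α} {Y : Ω → β}
    (h : ∀ a b, P {ω | X ω = a ∧ Y ω = b} = P {ω | X ω = a} * P {ω | Y ω = b}) :
    entropy P (fun ω => (X ω, Y ω)) = entropy P X + entropy P Y := by
  have hpair : ∀ ab : α × β, (P {ω | (X ω, Y ω) = ab}).toReal
      = (P {ω | X ω = ab.1}).toReal * (P {ω | Y ω = ab.2}).toReal := fun ab => by
    simp only [Prod.ext_iff, h, ENNReal.toReal_mul]
  have hlog : ∀ x y : ℝ,
      x * y * Real.log (x * y) = x * Real.log x * y + x * (y * Real.log y) := by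
    intro x y
    rcases eq_or_ne x 0 with rfl | hx
    · simp
    rcases eq_or_ne y 0 with rfl | hy
    · simp
    rw [Real.log_mul hx hy]
    ring
  simp only [entropy, Fintype.sum_prod_type, hpair, hlog, Finset.sum_add_distrib,
    ← Finset.mul_sum, ← Finset.sum_mul, sum_toReal_measure_fiber_eq_one, mul_one, one_mul]
  ring

lemma mutualInfo_eq_zero_of_indep [IsProbabilityMeasure P] {α β : Type*} [Fintype α]
    [Fintype β] {X : Ω → α} {Y : Ω → β}
    (h : ∀ a b, P {ω | X ω = a ∧ Y ω = b} = P {ω | X ω = a} * P {ω | Y ω = b}) :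
    mutualInfo P X Y = 0 := by
  rw [mutualInfo, entropy_pair_eq_add_of_indep h, sub_self]

theorem mutualInfo_add_eq_zero_of_uniform [IsProbabilityMeasure P] {α G H : Type*} [Fintype α]
    [AddGroup G] [Fintype G] [AddZeroClass H] [Fintype H] {S : Ω → α} {V : Ω → G}
    (hV : ∀ v₁ v₂, P {ω | V ω = v₁} = P {ω | V ω = v₂})
    (hindep : ∀ s v, P {ω | S ω = s ∧ V ω = v} = P {ω | S ω = s} * P {ω | V ω = v})
    (N : G →+ H) (a : α → H) (ha : ∀ s, a s ∈ Set.range N) :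
    mutualInfo P S (fun ω => a (S ω) + N (V ω)) = 0 := by
  refine mutualInfo_eq_zero_of_indep
    (measure_and_eq_mul_measure_of_eq_mul (p := fun y => P {ω | V ω ∈ N ⁻¹' {y}}) ?_)
  intro s y
  obtain ⟨g, hg⟩ := ha s
  have hset : {ω | S ω = s ∧ a (S ω) + N (V ω) = y}
      = {ω | S ω = s ∧ V ω ∈ Equiv.addLeft g ⁻¹' (N ⁻¹' {y})} := by
    ext ω
    simp +contextual [← hg]
  rw [hset, measure_and_mem_eq_mul hindep, measure_mem_preimage_equiv_of_uniform hV]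

end Probability

section RankMetric

variable {F L : Type*} [Field F] [Field L] [Algebra F L] {n : ℕ}

lemma rankWeight_le_card_of_mem_span {ι : Type*} [Fintype ι] {w : ι → Fin n → F}
    {c : Fin n → L} (hc : c ∈ Submodule.span L (Set.range fun j => algebraMap F L ∘ w j)) :
    rankWeight F c ≤ Fintype.card ι := by
  obtain ⟨lam, rfl⟩ := (Submodule.mem_span_range_iff_exists_fun L).1 hc
  have hcoord : ∀ i, (∑ j, lam j • (algebraMap F L ∘ w j)) i = ∑ j, w j i • lam j := fun i => by
    simp [Finset.sum_apply, Algebra.smul_def, mul_comm]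
  calc rankWeight F (∑ j, lam j • (algebraMap F L ∘ w j))
      ≤ Module.finrank F (Submodule.span F (Set.range lam)) := by
        have := FiniteDimensional.span_of_finite F (Set.finite_range lam)
        refine Submodule.finrank_mono (Submodule.span_le.2 ?_)
        rintro _ ⟨i, rfl⟩
        rw [hcoord]
        exact Submodule.sum_mem _ fun j _ =>
          Submodule.smul_mem _ _ (Submodule.subset_span ⟨j, rfl⟩)
    _ ≤ Fintype.card ι := finrank_range_le_card lam

lemma exists_linearIndependent_mulVec_eq_zero {μ k : ℕ} (B : Matrix (Fin μ) (Fin n) F)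
    (hμ : k + μ ≤ n) :
    ∃ w : Fin k → Fin n → F, LinearIndependent F w ∧ ∀ j, B *ᵥ w j = 0 := by
  have hker : k ≤ Module.finrank F (LinearMap.ker B.mulVecLin) := by
    have hrank := LinearMap.finrank_range_add_finrank_ker B.mulVecLin
    have hrange := Submodule.finrank_le (LinearMap.range B.mulVecLin)
    simp only [Module.finrank_fin_fun] at hrank hrange
    omega
  obtain ⟨w, hw⟩ := exists_linearIndependent_of_le_finrank hker
  exact ⟨fun j => w j, hw.map' _ (Submodule.ker_subtype _), fun j => (w j).2⟩

lemma sup_ker_map_eq_top {k μ : ℕ} {C : Submodule L (Fin n → L)}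
    (hC : ∀ c ∈ C, c ≠ 0 → k < rankWeight F c) (hCdim : Module.finrank L C + k = n)
    (B : Matrix (Fin μ) (Fin n) F) (hμ : k + μ ≤ n) :
    C ⊔ LinearMap.ker (B.map (algebraMap F L)).mulVecLin = ⊤ := by
  obtain ⟨w, hw, hBw⟩ := exists_linearIndependent_mulVec_eq_zero B hμ
  set U := Submodule.span L (Set.range fun j => algebraMap F L ∘ w j)
  have hUdim : Module.finrank L U = k := by
    rw [finrank_span_eq_card (linearIndependent_algebraMap_comp_iff.2 hw), Fintype.card_fin]
  have hUker : U ≤ LinearMap.ker (B.map (algebraMap F L)).mulVecLin := by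
    refine Submodule.span_le.2 ?_
    rintro _ ⟨j, rfl⟩
    ext i
    simp [← RingHom.map_mulVec, hBw]
  have hCU : C ⊓ U = ⊥ := by
    refine (Submodule.eq_bot_iff _).2 fun c ⟨hcC, hcU⟩ => by_contra fun hc => ?_
    have hle := rankWeight_le_card_of_mem_span hcU
    rw [Fintype.card_fin] at hle
    exact (hC c hcC hc).not_ge hle
  have hCU_top : C ⊔ U = ⊤ := by
    refine Submodule.eq_top_of_finrank_eq ?_
    have hsum := Submodule.finrank_sup_add_finrank_inf_eq C U
    rw [hCU, finrank_bot, hUdim] at hsum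
    rw [Module.finrank_fin_fun]
    omega
  exact top_le_iff.1 (hCU_top ▸ sup_le_sup_left hUker C)

lemma minRankDistEq.lt_rankWeight {C : Set (Fin n → L)} {d : ℕ}
    (hC : minRankDistEq F C (d + 1)) (h0 : (0 : Fin n → L) ∈ C) {c : Fin n → L} (hc : c ∈ C)
    (hc0 : c ≠ 0) : d < rankWeight F c := by
  simpa using hC.2 ⟨c, hc, 0, h0, hc0, rfl⟩

end RankMetric

lemma LinearMap.range_comp_eq_range_of_sup_ker_eq_top {R M M₂ M₃ : Type*} [Ring R]
    [AddCommGroup M] [AddCommGroup M₂] [AddCommGroup M₃] [Module R M] [Module R M₂] [Module R M₃]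
    {f : M →ₗ[R] M₂} {g : M₂ →ₗ[R] M₃} (h : LinearMap.range f ⊔ LinearMap.ker g = ⊤) :
    LinearMap.range (g ∘ₗ f) = LinearMap.range g := by
  rw [LinearMap.range_comp, LinearMap.range_eq_map g]
  refine le_antisymm (Submodule.map_mono le_top) ?_
  rw [LinearMap.map_le_map_iff, h]

section Stack

variable {R : Type*} [NonUnitalNonAssocSemiring R] {k n : ℕ}

lemma stackVec_eq_add (s : Fin k → R) (v : Fin (n - k) → R) :
    stackVec (n := n) s v = stackVec s 0 + stackVec 0 v := by
  funext i
  simp only [stackVec, Pi.add_apply]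
  split <;> simp

lemma mulVec_stackVec_zero_left (hkn : k < n) (T : Matrix (Fin n) (Fin n) R)
    (v : Fin (n - k) → R) :
    T *ᵥ stackVec 0 v = (lastRows hkn Tᵀ)ᵀ *ᵥ v := by
  ext i
  refine (Fintype.sum_of_injective (fun b : Fin (n - k) => (⟨k + b, by omega⟩ : Fin n))
    (fun b b' h => by simpa [Fin.ext_iff] using h) _ _ ?_ ?_).symm
  · rintro j hj
    have hjk : (j : ℕ) < k := by
      by_contra hjk
      exact hj ⟨⟨j - k, by omega⟩, Fin.ext (by simp; omega)⟩
    simp [stackVec, hjk]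
  · intro b
    simp [stackVec, lastRows]

lemma mulVec_stackVec (hkn : k < n) (T : Matrix (Fin n) (Fin n) R) (s : Fin k → R)
    (v : Fin (n - k) → R) :
    T *ᵥ stackVec s v = T *ᵥ stackVec s 0 + (lastRows hkn Tᵀ)ᵀ *ᵥ v := by
  rw [stackVec_eq_add, Matrix.mulVec_add, mulVec_stackVec_zero_left]

lemma finrank_range_mulVecLin_lastRows {K : Type*} [Field K] (hkn : k < n)
    {T : Matrix (Fin n) (Fin n) K} (hT : IsUnit T) :
    Module.finrank K (LinearMap.range (lastRows hkn Tᵀ)ᵀ.mulVecLin) = n - k := by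
  refine (LinearMap.finrank_range_of_inj ?_).trans (Module.finrank_fin_fun K)
  rw [Matrix.coe_mulVecLin, Matrix.mulVec_injective_iff]
  exact (Matrix.linearIndependent_cols_of_isUnit hT).comp _
    fun b b' h => by simpa [Fin.ext_iff] using h

end Stack

theorem encoder_generator_MRD_universally_secure_general
    (F L : Type) [Field F] [Fintype F]
    [Field L] [Fintype L] [Algebra F L]
    (n k : ℕ) (hkn : k < n)
    (T : Matrix (Fin n) (Fin n) L) (hT : IsUnit T)
    (hMRD : minRankDistEq F
      {x : Fin n → L | ∃ u : Fin (n - k) → L, x = (lastRows hkn Tᵀ)ᵀ *ᵥ u} (k + 1))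
    (Ω : Type) [Fintype Ω] [MeasurableSpace Ω] [MeasurableSingletonClass Ω]
    (P : Measure Ω) [IsProbabilityMeasure P]
    (S : Ω → Fin k → L) (V : Ω → Fin (n - k) → L)
    (hVunif : ∀ v₁ v₂ : Fin (n - k) → L, P {ω | V ω = v₁} = P {ω | V ω = v₂})
    (hindep : ∀ (s : Fin k → L) (v : Fin (n - k) → L),
      P {ω | S ω = s ∧ V ω = v} = P {ω | S ω = s} * P {ω | V ω = v})
    (X : Ω → Fin n → L)
    (hX : ∀ ω, X ω = T *ᵥ stackVec (S ω) (V ω)) :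
    ∀ (μ : ℕ), μ ≤ n - k → ∀ B : Matrix (Fin μ) (Fin n) F,
      mutualInfo P S (fun ω => (B.map (algebraMap F L)) *ᵥ X ω) = 0 := by
  intro μ hμ B
  set G := (lastRows hkn Tᵀ)ᵀ
  set Bl := B.map (algebraMap F L)
  have hcode : ∀ c ∈ LinearMap.range G.mulVecLin, c ≠ 0 → k < rankWeight F c := by
    rintro c ⟨u, rfl⟩ hc
    exact hMRD.lt_rankWeight ⟨0, (mulVec_zero _).symm⟩ ⟨u, rfl⟩ hc
  have hrange := LinearMap.range_comp_eq_range_of_sup_ker_eq_top <| sup_ker_map_eq_top hcode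
    (by rw [finrank_range_mulVecLin_lastRows hkn hT]; omega) B (by omega)
  have hY : ∀ ω, Bl *ᵥ X ω
      = Bl *ᵥ (T *ᵥ stackVec (S ω) 0) + (Bl.mulVecLin ∘ₗ G.mulVecLin) (V ω) := fun ω => by
    rw [hX, mulVec_stackVec hkn, mulVec_add]
    rfl
  simp only [hY]
  refine mutualInfo_add_eq_zero_of_uniform hVunif hindep
    (Bl.mulVecLin ∘ₗ G.mulVecLin).toAddMonoidHom (fun s => Bl *ᵥ (T *ᵥ stackVec s 0)) fun s => ?_
  change _ ∈ LinearMap.range (Bl.mulVecLin ∘ₗ G.mulVecLin)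
  rw [hrange]
  exact LinearMap.mem_range_self _ _

/-- Encoder structure for coset coding, generator-matrix form: with `T` invertible, `G` the
last `n - k` rows of `Tᵀ` generating an MRD code (minimum rank distance `k+1`), `V` uniform
on `L^{n-k}` independent of `S`, and `X = T·(S;V)`, the scheme is universally secure under
`μ` observations for every `μ ≤ n - k`. -/
theorem encoder_generator_MRD_universally_secure
    (q m : ℕ) (hq : IsPrimePow q)
    (F L : Type) [Field F] [Fintype F] (hF : Fintype.card F = q)
    [Field L] [Fintype L] [Algebra F L] (hm : Module.finrank F L = m)
    (n k : ℕ) (hmn : n ≤ m) (hk : 1 ≤ k) (hkn : k < n)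
    (T : Matrix (Fin n) (Fin n) L) (hT : IsUnit T)
    (hMRD : minRankDistEq F
      {x : Fin n → L | ∃ u : Fin (n - k) → L, x = (lastRows hkn Tᵀ)ᵀ *ᵥ u} (k + 1))
    (Ω : Type) [Fintype Ω] [MeasurableSpace Ω] [MeasurableSingletonClass Ω]
    (P : Measure Ω) [IsProbabilityMeasure P]
    (S : Ω → Fin k → L) (V : Ω → Fin (n - k) → L)
    (hVunif : ∀ v₁ v₂ : Fin (n - k) → L, P {ω | V ω = v₁} = P {ω | V ω = v₂})
    (hindep : ∀ (s : Fin k → L) (v : Fin (n - k) → L),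
      P {ω | S ω = s ∧ V ω = v} = P {ω | S ω = s} * P {ω | V ω = v})
    (X : Ω → Fin n → L)
    (hX : ∀ ω, X ω = T *ᵥ stackVec (S ω) (V ω)) :
    ∀ (μ : ℕ), μ ≤ n - k → ∀ B : Matrix (Fin μ) (Fin n) F,
      mutualInfo P S (fun ω => (B.map (algebraMap F L)) *ᵥ X ω) = 0 :=
  encoder_generator_MRD_universally_secure_general F L n k hkn T hT hMRD Ω P S V hVunif hindep X hX
end
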